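/- The substitution Y = (I_p - X)^{-1} - I_p maps the set {X symmetric : 0 < X < I_p} bijectively onto the cone of symmetric positive definite matrices, and under this change of variables ∫_{0 < X < I_p} (det X)^{a-(p+1)/2} (det(I_p - X))^{b-(p+1)/2} dX = ∫_{Y > 0} (det Y)^{a-(p+1)/2} (det(I_p + Y))^{-(a+b)} dY for all a, b > (p-1)/2. -/

import Mathlib

/-!
The inverse substitution is `X = I - (I + Y)⁻¹`. Both maps land in the right sets because matrix
inversion reverses the strict Loewner order: `A⁻¹ - B⁻¹ = B⁻¹ (C + C A⁻¹ C) B⁻¹` with `C = B - A`.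
The derivative of `X ↦ (I - X)⁻¹ - I` is the congruence `H ↦ (I - X)⁻¹ H (I - X)⁻¹`, and on
symmetric `p × p` matrices the congruence `H ↦ A H Aᵀ` has determinant `(det A)^(p+1)`: this is a
product count on diagonal matrices, while transvections are commutators and so are invisible to any
multiplicative function. Since `det Y = det X / det (I - X)` and `det (I + Y) = 1 / det (I - X)`,
the change of variables formula turns one integrand into the other.
-/

open MeasureTheory Matrix Real Finset

noncomputable section

/-- Index set for the independent entries of a symmetric `p × p` matrix. -/
abbrev SymIdx (p : ℕ) := {ij : Fin p × Fin p // ij.1 ≤ ij.2}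

/-- The symmetric matrix built from its upper-triangular coordinates. -/
def symOf {p : ℕ} (x : SymIdx p → ℝ) : Matrix (Fin p) (Fin p) ℝ :=
  Matrix.of fun i j => if h : i ≤ j then x ⟨(i, j), h⟩ else x ⟨(j, i), (le_total i j).resolve_left h⟩

/-- The real multivariate gamma function. -/
def Gammap (p : ℕ) (a : ℝ) : ℝ :=
  Real.pi ^ (((p : ℝ) * ((p : ℝ) - 1)) / 4) *
    ∏ i : Fin p, Real.Gamma (a - ((i : ℕ) : ℝ) / 2)

theorem MonoidHom.map_transvection_eq_one {n K M : Type*} [Fintype n] [DecidableEq n] [Field K]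
    [CommMonoid M] (h2 : (2 : K) ≠ 0) (φ : Matrix n n K →* M) {i j : n} (hij : i ≠ j) (c : K) :
    φ (transvection i j c) = 1 := by
  set D := diagonal (Function.update 1 i (2 : K))
  set D' := diagonal (Function.update 1 i (2⁻¹ : K))
  have hDD' : D * D' = 1 := by
    rw [diagonal_mul_diagonal, ← diagonal_one]
    congr 1
    ext k
    by_cases hk : k = i
    · subst hk; simp [h2]
    · simp [hk]
  -- conjugating by `D` doubles `c`, which makes every transvection a commutator
  have hconj : D * transvection i j c * D' = transvection i j (2 * c) := by
    ext k l
    simp only [D, D', transvection, diagonal_mul, mul_diagonal, Function.update_apply,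
      Pi.one_apply, Matrix.add_apply, Matrix.one_apply, single_apply]
    split_ifs <;> grind
  calc φ (transvection i j c)
      = φ (D * transvection i j c * D' * transvection i j (-c)) := by
        rw [hconj, transvection_mul_transvection_same i j hij, two_mul, add_neg_cancel_right]
    _ = φ (D * D') * φ (transvection i j c * transvection i j (-c)) := by
        simp only [map_mul]; ac_rfl
    _ = 1 := by
        rw [hDD', transvection_mul_transvection_same i j hij, add_neg_cancel, transvection_zero,
          map_one, one_mul]

section PosDef

variable {n K : Type*} [Fintype n] [DecidableEq n] [Field K] [PartialOrder K] [StarRing K]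
  [AddLeftMono K]

theorem Matrix.PosDef.inv_sub_inv {A B : Matrix n n K} (hA : A.PosDef) (hBA : (B - A).PosDef) :
    (A⁻¹ - B⁻¹).PosDef := by
  set C := B - A
  have hB : B.PosDef := by simpa [C] using hA.add hBA
  have hA' : IsUnit A.det := (isUnit_iff_isUnit_det A).mp hA.isUnit
  have hB' : IsUnit B.det := (isUnit_iff_isUnit_det B).mp hB.isUnit
  have hexpand : C + C * A⁻¹ * C = B * A⁻¹ * B - B := by
    simp only [C, sub_mul, mul_sub, Matrix.mul_assoc, nonsing_inv_mul _ hA', mul_nonsing_inv _ hA',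
      Matrix.mul_one, Matrix.one_mul]
    abel
  have hcongr : A⁻¹ - B⁻¹ = (B⁻¹)ᴴ * (C + Cᴴ * A⁻¹ * C) * B⁻¹ := by
    rw [hB.inv.isHermitian.eq, hBA.isHermitian.eq, hexpand]
    simp only [sub_mul, mul_sub, Matrix.mul_assoc, mul_nonsing_inv _ hB', Matrix.mul_one]
    rw [← Matrix.mul_assoc, nonsing_inv_mul _ hB', Matrix.one_mul]
  rw [hcongr]
  exact (hBA.add_posSemidef (hA.inv.posSemidef.conjTranspose_mul_mul_same C))
    |>.conjTranspose_mul_mul_same (mulVec_injective_iff_isUnit.mpr hB.inv.isUnit)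

lemma Matrix.PosDef.inv_one_sub_sub_one {X : Matrix n n K} (hX : X.PosDef)
    (h1X : (1 - X).PosDef) : ((1 - X)⁻¹ - 1).PosDef := by
  simpa using h1X.inv_sub_inv (B := 1) (by simpa using hX)

lemma Matrix.PosDef.one_sub_inv_one_add [StarOrderedRing K] {Y : Matrix n n K} (hY : Y.PosDef) :
    (1 - (1 + Y)⁻¹).PosDef := by
  have h := PosDef.one.inv_sub_inv (B := 1 + Y) (by simpa using hY)
  rwa [inv_one] at h

end PosDef

lemma Matrix.det_inv_one_sub_sub_one {n K : Type*} [Fintype n] [DecidableEq n] [Field K]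
    {X : Matrix n n K} (h : IsUnit (1 - X).det) :
    ((1 - X)⁻¹ - 1).det = (1 - X).det⁻¹ * X.det := by
  have hfactor : (1 - X)⁻¹ - 1 = (1 - X)⁻¹ * X :=
    calc (1 - X)⁻¹ - 1 = (1 - X)⁻¹ * (1 - (1 - X)) := by
          rw [Matrix.mul_sub, Matrix.mul_one, nonsing_inv_mul _ h]
      _ = (1 - X)⁻¹ * X := by rw [sub_sub_cancel]
  rw [hfactor, det_mul, det_nonsing_inv, Ring.inverse_eq_inv']

section Measurability

open scoped ComplexOrder

variable {n 𝕜 : Type*} [Fintype n] [RCLike 𝕜]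

lemma Matrix.isClosed_setOf_posSemidef : IsClosed {M : Matrix n n 𝕜 | M.PosSemidef} := by
  simp only [posSemidef_iff_dotProduct_mulVec, Set.ofPred_and, Set.ofPred_forall]
  exact (isClosed_eq continuous_id.matrix_conjTranspose continuous_id).inter
    (isClosed_iInter fun v => isClosed_le continuous_const
      (continuous_const.dotProduct (continuous_id.matrix_mulVec continuous_const)))

lemma Continuous.measurableSet_setOf_posDef [DecidableEq n] {α : Type*} [TopologicalSpace α]
    [MeasurableSpace α] [OpensMeasurableSpace α] {f : α → Matrix n n 𝕜} (hf : Continuous f) :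
    MeasurableSet {a | (f a).PosDef} := by
  have hdecomp : {a | (f a).PosDef} = f ⁻¹' {M | M.PosSemidef} ∩ {a | (f a).det ≠ 0} := by
    ext a
    exact ⟨fun h => ⟨h.posSemidef, h.det_pos.ne'⟩, fun h => h.1.posDef_iff_det_ne_zero.mpr h.2⟩
  rw [hdecomp]
  exact (isClosed_setOf_posSemidef.preimage hf).measurableSet.inter
    (isOpen_ne_fun hf.matrix_det continuous_const).measurableSet

end Measurability

section SymmetricCoordinates

variable {p : ℕ}

def symCoords (M : Matrix (Fin p) (Fin p) ℝ) : SymIdx p → ℝ := fun ij => M ij.1.1 ij.1.2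

lemma symOf_apply_of_le (x : SymIdx p → ℝ) {i j : Fin p} (h : i ≤ j) :
    symOf x i j = x ⟨(i, j), h⟩ := by
  simp [symOf, h]

lemma isSymm_symOf (x : SymIdx p → ℝ) : (symOf x).IsSymm := by
  ext i j
  rcases lt_trichotomy i j with h | rfl | h
  · simp [symOf, h.le, h.not_ge]
  · rfl
  · simp [symOf, h.le, h.not_ge]

@[simp] lemma symCoords_symOf (x : SymIdx p → ℝ) : symCoords (symOf x) = x :=
  funext fun ij => symOf_apply_of_le x ij.2

lemma symOf_symCoords {M : Matrix (Fin p) (Fin p) ℝ} (hM : M.IsSymm) :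
    symOf (symCoords M) = M := by
  ext i j
  by_cases h : i ≤ j
  · simp [symOf, symCoords, h]
  · simpa [symOf, symCoords, h] using hM.apply i j

def symOfₗ : (SymIdx p → ℝ) →ₗ[ℝ] Matrix (Fin p) (Fin p) ℝ where
  toFun := symOf
  map_add' x y := by ext i j; by_cases h : i ≤ j <;> simp [symOf, h]
  map_smul' c x := by ext i j; by_cases h : i ≤ j <;> simp [symOf, h]

def symCoordsₗ : Matrix (Fin p) (Fin p) ℝ →ₗ[ℝ] (SymIdx p → ℝ) where
  toFun := symCoords
  map_add' _ _ := rfl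
  map_smul' _ _ := rfl

@[simp] lemma symOfₗ_apply (x : SymIdx p → ℝ) : symOfₗ x = symOf x := rfl

@[simp] lemma symCoordsₗ_apply (M : Matrix (Fin p) (Fin p) ℝ) : symCoordsₗ M = symCoords M := rfl

lemma continuous_symOf : Continuous (symOf (p := p)) :=
  symOfₗ.continuous_of_finiteDimensional

def symCongr : Matrix (Fin p) (Fin p) ℝ →* Module.End ℝ (SymIdx p → ℝ) where
  toFun A := symCoordsₗ ∘ₗ LinearMap.mulRight ℝ Aᵀ ∘ₗ LinearMap.mulLeft ℝ A ∘ₗ symOfₗ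
  map_one' := LinearMap.ext fun x => by simp
  map_mul' A B := LinearMap.ext fun x => by
    have hsymm : (B * symOf x * Bᵀ).IsSymm := by
      simp [IsSymm, transpose_mul, (isSymm_symOf x).eq, Matrix.mul_assoc]
    simp only [LinearMap.comp_apply, symOfₗ_apply, symCoordsₗ_apply, LinearMap.mulLeft_apply,
      LinearMap.mulRight_apply, Module.End.mul_apply]
    rw [symOf_symCoords hsymm, transpose_mul]
    simp only [Matrix.mul_assoc]

lemma symCongr_apply (A : Matrix (Fin p) (Fin p) ℝ) (x : SymIdx p → ℝ) :
    symCongr A x = symCoords (A * symOf x * Aᵀ) := rfl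

lemma symCongr_diagonal (d : Fin p → ℝ) :
    symCongr (diagonal d) = toLin' (diagonal fun ij : SymIdx p => d ij.1.1 * d ij.1.2) := by
  refine LinearMap.ext fun x => funext fun ij => ?_
  simp [symCongr_apply, symCoords, mulVec_diagonal, symOf_apply_of_le x ij.2]
  ring

lemma prod_symIdx {M : Type*} [CommMonoid M] (d : Fin p → M) :
    ∏ ij : SymIdx p, d ij.1.1 * d ij.1.2 = (∏ i, d i) ^ (p + 1) := by
  set S := univ.filter fun ij : Fin p × Fin p => ij.1 ≤ ij.2
  have hS : ∀ ij, ij ∈ S ↔ ij.1 ≤ ij.2 := by simp [S]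
  have hrows : ∏ ij ∈ S, d ij.1 = ∏ i, d i ^ (p - i) := by
    rw [prod_finset_product S univ (fun i => univ.filter (i ≤ ·)) (by simp [hS])]
    simp [prod_const, filter_le_eq_Ici, Fin.card_Ici]
  have hcols : ∏ ij ∈ S, d ij.2 = ∏ j, d j ^ (j + 1 : ℕ) := by
    rw [prod_finset_product_right S univ (fun j => univ.filter (· ≤ j)) (by simp [hS])]
    simp [prod_const, filter_ge_eq_Iic, Fin.card_Iic]
  rw [prod_mul_distrib, ← prod_subtype S hS (fun ij => d ij.1),
    ← prod_subtype S hS (fun ij => d ij.2), hrows, hcols, ← prod_mul_distrib, ← prod_pow]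
  exact prod_congr rfl fun i _ => by rw [← pow_add]; congr 1; omega

theorem det_symCongr (A : Matrix (Fin p) (Fin p) ℝ) :
    LinearMap.det (symCongr A) = A.det ^ (p + 1) := by
  induction A using diagonal_transvection_induction with
  | hdiag d =>
    rw [symCongr_diagonal, LinearMap.det_toLin', det_diagonal, det_diagonal, prod_symIdx]
  | htransvec t =>
    rw [TransvectionStruct.toMatrix, det_transvection_of_ne _ _ t.hij, one_pow]
    exact (LinearMap.det.comp symCongr).map_transvection_eq_one two_ne_zero t.hij t.c
  | hmul A B hA hB => rw [map_mul, map_mul, hA, hB, det_mul, mul_pow]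

def typeIToTypeII (x : SymIdx p → ℝ) : SymIdx p → ℝ := symCoords ((1 - symOf x)⁻¹ - 1)

def typeIIToTypeI (y : SymIdx p → ℝ) : SymIdx p → ℝ := symCoords (1 - (1 + symOf y)⁻¹)

lemma symOf_typeIToTypeII (x : SymIdx p → ℝ) :
    symOf (typeIToTypeII x) = (1 - symOf x)⁻¹ - 1 :=
  symOf_symCoords (((isSymm_one.sub (isSymm_symOf x)).inv).sub isSymm_one)

lemma symOf_typeIIToTypeI (y : SymIdx p → ℝ) :
    symOf (typeIIToTypeI y) = 1 - (1 + symOf y)⁻¹ :=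
  symOf_symCoords (isSymm_one.sub ((isSymm_one.add (isSymm_symOf y)).inv))

theorem bijOn_typeIToTypeII :
    Set.BijOn (typeIToTypeII (p := p)) {x | (symOf x).PosDef ∧ (1 - symOf x).PosDef}
      {y | (symOf y).PosDef} := by
  refine Set.InvOn.bijOn (f' := typeIIToTypeI) ⟨fun x hx => ?_, fun y hy => ?_⟩
    (fun x hx => ?_) (fun y hy => ?_)
  · have hB : IsUnit (1 - symOf x).det := hx.2.isUnit.map detMonoidHom
    rw [typeIIToTypeI, symOf_typeIToTypeII, add_sub_cancel, nonsing_inv_nonsing_inv _ hB,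
      sub_sub_cancel, symCoords_symOf]
  · have hB : IsUnit (1 + symOf y).det := (PosDef.one.add hy).isUnit.map detMonoidHom
    rw [typeIToTypeII, symOf_typeIIToTypeI, sub_sub_cancel, nonsing_inv_nonsing_inv _ hB,
      add_sub_cancel_left, symCoords_symOf]
  · rw [Set.mem_ofPred_eq, symOf_typeIToTypeII]
    exact hx.1.inv_one_sub_sub_one hx.2
  · rw [Set.mem_ofPred_eq, symOf_typeIIToTypeI, sub_sub_cancel]
    exact ⟨hy.one_sub_inv_one_add, (PosDef.one.add hy).inv⟩

section Derivative

attribute [local instance] Matrix.linftyOpNormedAddCommGroup Matrix.linftyOpNormedSpace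
  Matrix.linftyOpNormedRing Matrix.linftyOpNormedAlgebra

lemma hasFDerivAt_typeIToTypeII {x : SymIdx p → ℝ} (hx : IsUnit (1 - symOf x)) :
    HasFDerivAt typeIToTypeII (LinearMap.toContinuousLinearMap (symCongr (1 - symOf x)⁻¹)) x := by
  have hinv := (hasFDerivAt_ringInverse (𝕜 := ℝ) hx.unit).comp x
    ((LinearMap.toContinuousLinearMap symOfₗ).hasFDerivAt.const_sub 1)
  have hfun : typeIToTypeII (p := p) = LinearMap.toContinuousLinearMap symCoordsₗ ∘
      fun z => (Ring.inverse ∘ fun z => 1 - LinearMap.toContinuousLinearMap symOfₗ z) z - 1 := by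
    funext z
    simp [typeIToTypeII, nonsing_inv_eq_ringInverse]
  rw [hfun]
  refine ((LinearMap.toContinuousLinearMap symCoordsₗ).hasFDerivAt.comp x
    (hinv.sub_const 1)).congr_fderiv (ContinuousLinearMap.ext fun h => ?_)
  have hBinv : ((hx.unit⁻¹ : (Matrix (Fin p) (Fin p) ℝ)ˣ) : Matrix (Fin p) (Fin p) ℝ) =
      (1 - symOf x)⁻¹ := by
    rw [coe_units_inv, hx.unit_spec]
  have hsymm : ((1 - symOf x)⁻¹)ᵀ = (1 - symOf x)⁻¹ := (isSymm_one.sub (isSymm_symOf x)).inv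
  rw [hBinv]
  change symCoords (-((1 - symOf x)⁻¹ * -symOf h * (1 - symOf x)⁻¹)) =
    symCoords ((1 - symOf x)⁻¹ * symOf h * ((1 - symOf x)⁻¹)ᵀ)
  rw [hsymm, Matrix.mul_neg, Matrix.neg_mul, neg_neg]

end Derivative

end SymmetricCoordinates

lemma typeII_integrand_pullback {s t : ℝ} (hs : 0 ≤ s) (ht : 0 < t) (p : ℕ) (a b : ℝ) :
    |t⁻¹ ^ (p + 1)| * ((t⁻¹ * s) ^ (a - ((p : ℝ) + 1) / 2) * t⁻¹ ^ (-(a + b))) =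
      s ^ (a - ((p : ℝ) + 1) / 2) * t ^ (b - ((p : ℝ) + 1) / 2) := by
  have hpow (c : ℝ) : t⁻¹ ^ c = t ^ (-c) := by rw [Real.inv_rpow ht.le, Real.rpow_neg ht.le]
  rw [abs_of_pos (by positivity), ← Real.rpow_natCast, Real.mul_rpow (by positivity) hs, hpow,
    hpow, hpow, mul_comm _ (s ^ _), mul_left_comm, ← Real.rpow_add ht, mul_assoc,
    ← Real.rpow_add ht]
  congr 2
  push_cast
  ring

theorem beta_typeI_typeII_change_of_variables (p : ℕ) :
    Set.BijOn
      (fun x : SymIdx p → ℝ => fun ij : SymIdx p =>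
        ((1 - symOf x)⁻¹ - 1) ij.1.1 ij.1.2)
      {x : SymIdx p → ℝ | (symOf x).PosDef ∧ (1 - symOf x).PosDef}
      {y : SymIdx p → ℝ | (symOf y).PosDef}
    ∧ ∀ a b : ℝ, ((p : ℝ) - 1) / 2 < a → ((p : ℝ) - 1) / 2 < b →
      (∫ x in {x : SymIdx p → ℝ | (symOf x).PosDef ∧ (1 - symOf x).PosDef},
          (symOf x).det ^ (a - ((p : ℝ) + 1) / 2) *
            (1 - symOf x).det ^ (b - ((p : ℝ) + 1) / 2))
        = ∫ y in {y : SymIdx p → ℝ | (symOf y).PosDef},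
            (symOf y).det ^ (a - ((p : ℝ) + 1) / 2) *
              (1 + symOf y).det ^ (-(a + b)) := by
  have hbij := bijOn_typeIToTypeII (p := p)
  refine ⟨hbij, fun a b _ _ => ?_⟩
  have hS : MeasurableSet {x : SymIdx p → ℝ | (symOf x).PosDef ∧ (1 - symOf x).PosDef} :=
    continuous_symOf.measurableSet_setOf_posDef.inter
      (continuous_const.sub continuous_symOf).measurableSet_setOf_posDef
  rw [← hbij.image_eq, integral_image_eq_integral_abs_det_fderiv_smul volume hS
    (fun x hx => (hasFDerivAt_typeIToTypeII hx.2.isUnit).hasFDerivWithinAt) hbij.injOn]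
  refine setIntegral_congr_fun hS fun x ⟨hX, hB⟩ => ?_
  rw [LinearMap.det_toContinuousLinearMap, det_symCongr, smul_eq_mul, symOf_typeIToTypeII,
    det_inv_one_sub_sub_one (hB.isUnit.map detMonoidHom), add_sub_cancel, det_nonsing_inv,
    Ring.inverse_eq_inv']
  exact (typeII_integrand_pullback hX.det_pos.le hB.det_pos p a b).symm
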